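/- Let γ^k_{ij} ∈ ℝ (i,j,k ∈ {1,2}, γ^k_{ij} = γ^k_{ji}) be constants with γ¹_{12} = 0 and γ¹_{22} = 0, and let D be the connection on ℝ² with constant Christoffel symbols Γ^k_{ij} = γ^k_{ij} (a Type A locally homogeneous connection with Ricci tensor of rank at most one). If H : ℝ → ℝ is twice differentiable and satisfies the linear ODE H''(t) − γ¹_{11} H'(t) + 2(γ¹_{11} γ²_{12} + γ²_{11} γ²_{22} − (γ²_{12})²) = 0 for all t, then h(x¹, x²) := H(x¹) satisfies the affine gradient Ricci soliton equation Hes_h(∂_i,∂_j) + 2ρ^{sym}_{ij} = 0 on ℝ² for all i,j ∈ {1,2}. -/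

import Mathlib

noncomputable section

/-- Points of the affine surface (local coordinates `(x¹,x²)`). -/
abbrev Pt2 := Fin 2 → ℝ

/-- Partial derivative `∂_{x^i}`. -/
def pd2 (i : Fin 2) (f : Pt2 → ℝ) (p : Pt2) : ℝ :=
  fderiv ℝ f p (Pi.single i 1)

/-- The Ricci tensor `ρ_{ij}` of the affine connection with Christoffel symbols `Γ^k_{ij}`:
`ρ_{ij} = Σ_k ∂_{x^k}Γ^k_{ij} − ∂_{x^i}(Σ_k Γ^k_{kj}) + Σ_{k,l}(Γ^k_{kl}Γ^l_{ij} − Γ^k_{il}Γ^l_{kj})`. -/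
def ricciD (Γ : Fin 2 → Fin 2 → Fin 2 → Pt2 → ℝ) (i j : Fin 2) (p : Pt2) : ℝ :=
  (∑ k : Fin 2, pd2 k (Γ k i j) p) - pd2 i (fun q => ∑ k : Fin 2, Γ k k j q) p
    + ∑ k : Fin 2, ∑ l : Fin 2, (Γ k k l p * Γ l i j p - Γ k i l p * Γ l k j p)

/-- The symmetric part `ρ^{sym}_{ij} = ½(ρ_{ij}+ρ_{ji})` of the Ricci tensor. -/
def ricciDSym (Γ : Fin 2 → Fin 2 → Fin 2 → Pt2 → ℝ) (i j : Fin 2) (p : Pt2) : ℝ :=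
  (ricciD Γ i j p + ricciD Γ j i p) / 2

/-- The affine Hessian `Hes_h(∂_i,∂_j) = ∂_i∂_j h − Σ_k Γ^k_{ij} ∂_k h`. -/
def hessD (Γ : Fin 2 → Fin 2 → Fin 2 → Pt2 → ℝ) (h : Pt2 → ℝ) (i j : Fin 2) (p : Pt2) : ℝ :=
  pd2 i (pd2 j h) p - ∑ k : Fin 2, Γ k i j p * pd2 k h p

/-- The covariant derivative of the Ricci tensor:
`(D_{∂_i}ρ)_{jk} = ∂_i ρ_{jk} − Σ_l Γ^l_{ij} ρ_{lk} − Σ_l Γ^l_{ik} ρ_{jl}`. -/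
def covRicciD (Γ : Fin 2 → Fin 2 → Fin 2 → Pt2 → ℝ) (i j k : Fin 2) (p : Pt2) : ℝ :=
  pd2 i (fun q => ricciD Γ j k q) p - (∑ l : Fin 2, Γ l i j p * ricciD Γ l k p)
    - ∑ l : Fin 2, Γ l i k p * ricciD Γ j l p

/-! With constant Christoffel symbols the Ricci tensor is a quadratic expression in the `γ`, and
`γ¹₁₂ = γ¹₂₂ = 0` makes it, as well as the Christoffel part of the Hessian of `h = H(x¹)`, a
multiple of `dx¹ ⊗ dx¹`. The soliton equation thus reduces to its `(1,1)` entry, which is the ODE. -/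

theorem pd2_const (c : ℝ) (i : Fin 2) (p : Pt2) : pd2 i (fun _ => c) p = 0 := by
  simp [pd2]

theorem pd2_comp_apply (F : ℝ → ℝ) (i m : Fin 2) (p : Pt2) (hF : DifferentiableAt ℝ F (p m)) :
    pd2 i (fun q => F (q m)) p = (Pi.single i 1 : Pt2) m * deriv F (p m) := by
  rw [pd2, show (fun q : Pt2 => F (q m)) = F ∘ fun q => q m from rfl,
    (hF.hasDerivAt.comp_hasFDerivAt p (hasFDerivAt_apply m p)).fderiv]
  simp [mul_comm]

theorem ricciD_const (γ : Fin 2 → Fin 2 → Fin 2 → ℝ) (i j : Fin 2) (p : Pt2) :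
    ricciD (fun k i j _ => γ k i j) i j p
      = ∑ k : Fin 2, ∑ l : Fin 2, (γ k k l * γ l i j - γ k i l * γ l k j) := by
  simp [ricciD, pd2_const]

theorem hessD_const_comp_apply (γ : Fin 2 → Fin 2 → Fin 2 → ℝ) (H : ℝ → ℝ) (m i j : Fin 2)
    (p : Pt2) (hH : Differentiable ℝ H) (hH' : DifferentiableAt ℝ (deriv H) (p m)) :
    hessD (fun k i j _ => γ k i j) (fun q => H (q m)) i j p
      = (Pi.single i 1 : Pt2) m * (Pi.single j 1 : Pt2) m * deriv (deriv H) (p m)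
        - γ m i j * deriv H (p m) := by
  have hgrad (k : Fin 2) : pd2 k (fun q => H (q m))
      = fun q => (fun t => (Pi.single k 1 : Pt2) m * deriv H t) (q m) :=
    funext fun q => pd2_comp_apply H k m q (hH _)
  have hsecond : pd2 i (pd2 j fun q => H (q m)) p
      = (Pi.single i 1 : Pt2) m * (Pi.single j 1 : Pt2) m * deriv (deriv H) (p m) := by
    rw [hgrad, pd2_comp_apply _ i m p (hH'.const_mul _), deriv_const_mul _ hH', mul_assoc]
  rw [hessD, hsecond]
  simp [pd2_comp_apply H _ m p (hH _), Pi.single_apply]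

section RankOne

variable (γ : Fin 2 → Fin 2 → Fin 2 → ℝ) (hγsym : ∀ k i j, γ k i j = γ k j i)
  (h12 : γ 0 0 1 = 0) (h22 : γ 0 1 1 = 0)
include hγsym h12 h22

theorem christoffel_zero_eq_of_rankOne (i j : Fin 2) :
    γ 0 i j = (Pi.single i 1 : Pt2) 0 * (Pi.single j 1 : Pt2) 0 * γ 0 0 0 := by
  fin_cases i <;> fin_cases j <;> simp [h12, h22, hγsym 0 1 0]

theorem ricciD_const_of_rankOne (i j : Fin 2) (p : Pt2) :
    ricciD (fun k i j _ => γ k i j) i j p = (Pi.single i 1 : Pt2) 0 * (Pi.single j 1 : Pt2) 0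
      * (γ 0 0 0 * γ 1 0 1 + γ 1 0 0 * γ 1 1 1 - γ 1 0 1 ^ 2) := by
  rw [ricciD_const]
  fin_cases i <;> fin_cases j <;>
    simp only [Fin.zero_eta, Fin.mk_one, Fin.isValue, Fin.sum_univ_two, Pi.single_eq_same,
      Pi.single_eq_of_ne, ne_eq, zero_ne_one, not_false_eq_true, h12, h22,
      hγsym 0 1 0, hγsym 1 1 0] <;> ring

theorem ricciDSym_const_of_rankOne (i j : Fin 2) (p : Pt2) :
    ricciDSym (fun k i j _ => γ k i j) i j p = (Pi.single i 1 : Pt2) 0 * (Pi.single j 1 : Pt2) 0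
      * (γ 0 0 0 * γ 1 0 1 + γ 1 0 0 * γ 1 1 1 - γ 1 0 1 ^ 2) := by
  rw [ricciDSym, ricciD_const_of_rankOne γ hγsym h12 h22,
    ricciD_const_of_rankOne γ hγsym h12 h22]
  ring

end RankOne

/-- For a Type A homogeneous connection with constant Christoffel symbols
`γ^k_{ij}` satisfying `γ¹_{12} = γ¹_{22} = 0` (Ricci tensor of rank at most one), any
solution `H` of the linear ODE
`H'' − γ¹_{11} H' + 2(γ¹_{11}γ²_{12} + γ²_{11}γ²_{22} − (γ²_{12})²) = 0`
yields an affine gradient Ricci soliton with potential `h(x¹,x²) = H(x¹)`.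
(Index convention: `γ k i j = γ^{k+1}_{(i+1)(j+1)}`.) -/
theorem stmt7 (γ : Fin 2 → Fin 2 → Fin 2 → ℝ)
    (hγsym : ∀ k i j, γ k i j = γ k j i)
    (h12 : γ 0 0 1 = 0) (h22 : γ 0 1 1 = 0)
    (Γ : Fin 2 → Fin 2 → Fin 2 → Pt2 → ℝ) (hΓ : Γ = fun k i j _ => γ k i j)
    (H : ℝ → ℝ) (hH1 : Differentiable ℝ H) (hH2 : Differentiable ℝ (deriv H))
    (hODE : ∀ t : ℝ, deriv (deriv H) t - γ 0 0 0 * deriv H t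
      + 2 * (γ 0 0 0 * γ 1 0 1 + γ 1 0 0 * γ 1 1 1 - (γ 1 0 1) ^ 2) = 0)
    (h : Pt2 → ℝ) (hh : h = fun p => H (p 0)) :
    ∀ p : Pt2, ∀ i j : Fin 2, hessD Γ h i j p + 2 * ricciDSym Γ i j p = 0 := by
  subst hΓ hh
  intro p i j
  rw [hessD_const_comp_apply γ H 0 i j p hH1 (hH2 _),
    ricciDSym_const_of_rankOne γ hγsym h12 h22, christoffel_zero_eq_of_rankOne γ hγsym h12 h22]
  linear_combination (Pi.single i 1 : Pt2) 0 * (Pi.single j 1 : Pt2) 0 * hODE (p 0)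

end
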